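/- Let n ∈ ℕ and let R : ℝ → Matrix (Fin n) (Fin n) ℝ be differentiable with R(t) orthogonal (R(t)·R(t)ᵀ = 1) for all t, and let ω, Ω : ℝ → Matrix (Fin n) (Fin n) ℝ take skew-symmetric values. Suppose that for every constant symmetric matrix H ∈ Matrix (Fin n) (Fin n) ℝ and every t, the function h := fun t => R(t)·H·R(t)ᵀ satisfies h'(t) + h(t)·ω(t) − ω(t)·h(t) = R(t)·(H·Ω(t) − Ω(t)·H)·R(t)ᵀ. Then for all t: ω(t) = R'(t)·R(t)ᵀ + R(t)·Ω(t)·R(t)ᵀ. -/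

import Mathlib

/-!
Differentiating `R Rᵀ = 1` shows that `W = R'Rᵀ` is skew. For a symmetric `S`, the hypothesis
at the symmetric matrix `H = Rᵀ S R` becomes, by the product rule and `R Rᵀ = 1`,
the statement that `K = ω - W - R Ω Rᵀ` commutes with `S`. So `K` is a skew matrix commuting
with every symmetric matrix, in particular with the diagonal matrix units, hence `K = 0`.
-/

open Matrix

/-- Entrywise derivative of a matrix-valued function of a real variable. -/
noncomputable def matDeriv {n : ℕ} (A : ℝ → Matrix (Fin n) (Fin n) ℝ) (t : ℝ) :
    Matrix (Fin n) (Fin n) ℝ :=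
  Matrix.of fun i j => deriv (fun s => A s i j) t

theorem hasDerivAt_matrix_mul_apply {l m p : Type*} [Fintype m]
    {A : ℝ → Matrix l m ℝ} {B : ℝ → Matrix m p ℝ} {A' : Matrix l m ℝ} {B' : Matrix m p ℝ}
    {t : ℝ} (hA : ∀ i k, HasDerivAt (fun s => A s i k) (A' i k) t)
    (hB : ∀ k j, HasDerivAt (fun s => B s k j) (B' k j) t) (i : l) (j : p) :
    HasDerivAt (fun s => (A s * B s) i j) ((A' * B t + A t * B') i j) t := by
  simp only [mul_apply, Matrix.add_apply, ← Finset.sum_add_distrib]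
  exact HasDerivAt.fun_sum fun k _ => (hA i k).fun_mul (hB k j)

section MatDeriv

variable {n : ℕ} {R : ℝ → Matrix (Fin n) (Fin n) ℝ} {t : ℝ}

@[simp]
theorem matDeriv_const (A : Matrix (Fin n) (Fin n) ℝ) : matDeriv (fun _ => A) t = 0 := by
  ext i j
  simp [matDeriv]

theorem matDeriv_mul_mul_transpose (hR : ∀ i j, DifferentiableAt ℝ (fun s => R s i j) t)
    (H : Matrix (Fin n) (Fin n) ℝ) :
    matDeriv (fun s => R s * H * (R s)ᵀ) t
      = matDeriv R t * H * (R t)ᵀ + R t * H * (matDeriv R t)ᵀ := by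
  have hR' (i j : Fin n) : HasDerivAt (fun s => R s i j) (matDeriv R t i j) t :=
    (hR i j).hasDerivAt
  have hRH := hasDerivAt_matrix_mul_apply (B' := 0) hR' fun k j => hasDerivAt_const t (H k j)
  ext i j
  rw [matDeriv, of_apply, (hasDerivAt_matrix_mul_apply (B := fun s => (R s)ᵀ)
    (B' := (matDeriv R t)ᵀ) hRH (fun k j => hR' j k) i j).deriv]
  simp [matDeriv]

theorem mul_transpose_matDeriv_of_orthogonal (horth : ∀ s, R s * (R s)ᵀ = 1)
    (hR : ∀ i j, DifferentiableAt ℝ (fun s => R s i j) t) :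
    R t * (matDeriv R t)ᵀ = -(matDeriv R t * (R t)ᵀ) := by
  have h := matDeriv_mul_mul_transpose hR 1
  simp only [Matrix.mul_one, horth, matDeriv_const] at h
  exact (neg_eq_of_add_eq_zero_right h.symm).symm

end MatDeriv

namespace Matrix

variable {ι α : Type*} [Fintype ι]

theorem eq_zero_of_transpose_eq_neg_of_forall_isSymm_commute [DecidableEq ι] [Ring α]
    [IsAddTorsionFree α] {K : Matrix ι ι α} (hK : Kᵀ = -K)
    (hcomm : ∀ S : Matrix ι ι α, S.IsSymm → Commute K S) : K = 0 := by
  ext i j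
  obtain rfl | hij := eq_or_ne i j
  · exact self_eq_neg.mp (by simpa using congr_fun₂ hK i i)
  · exact col_eq_zero_of_commute_single (hcomm _ (transpose_single j j 1)).symm hij

variable [CommRing α]

theorem IsSymm.transpose_mul_mul {S : Matrix ι ι α} (hS : S.IsSymm) (Q : Matrix ι ι α) :
    (Qᵀ * S * Q).IsSymm := by
  simp [IsSymm, transpose_mul, hS.eq, Matrix.mul_assoc]

theorem commute_of_corotational_rate_eq [DecidableEq ι] {Q D ω Ω S : Matrix ι ι α}
    (hQ : Q * Qᵀ = 1) (hQD : Q * Dᵀ = -(D * Qᵀ))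
    (h : D * (Qᵀ * S * Q) * Qᵀ + Q * (Qᵀ * S * Q) * Dᵀ
        + Q * (Qᵀ * S * Q) * Qᵀ * ω - ω * (Q * (Qᵀ * S * Q) * Qᵀ)
      = Q * ((Qᵀ * S * Q) * Ω - Ω * (Qᵀ * S * Q)) * Qᵀ) :
    Commute (ω - D * Qᵀ - Q * Ω * Qᵀ) S := by
  have hQ_left (X : Matrix ι ι α) : Q * (Qᵀ * X) = X := by
    rw [← Matrix.mul_assoc, hQ, Matrix.one_mul]
  simp only [Matrix.mul_assoc, Matrix.mul_sub, Matrix.sub_mul, hQ, hQ_left, hQD, Matrix.mul_one,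
    Matrix.mul_neg] at h
  simp only [Commute, SemiconjBy, Matrix.mul_assoc, Matrix.mul_sub, Matrix.sub_mul]
  linear_combination (norm := abel) -h

end Matrix

/-- Proposition 2.2 (necessity): if the corotational rates of `h = R·H·Rᵀ` and `H`
associated with skew spins `ω` and `Ω` are objective counterparts for every constant
symmetric `H`, then `ω = R'Rᵀ + R·Ω·Rᵀ`. -/
theorem spin_relation_of_corotational_counterparts {n : ℕ}
    (R ω Ω : ℝ → Matrix (Fin n) (Fin n) ℝ)
    (hR : ∀ t, ∀ i j, DifferentiableAt ℝ (fun s => R s i j) t)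
    (horth : ∀ t, R t * (R t)ᵀ = 1)
    (hω : ∀ t, (ω t)ᵀ = -ω t)
    (hΩ : ∀ t, (Ω t)ᵀ = -Ω t)
    (hyp : ∀ H : Matrix (Fin n) (Fin n) ℝ, Hᵀ = H → ∀ t : ℝ,
      matDeriv (fun s => R s * H * (R s)ᵀ) t
        + (R t * H * (R t)ᵀ) * ω t - ω t * (R t * H * (R t)ᵀ)
      = R t * (H * Ω t - Ω t * H) * (R t)ᵀ) :
    ∀ t : ℝ, ω t = matDeriv R t * (R t)ᵀ + R t * Ω t * (R t)ᵀ := by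
  intro t
  have hQD := mul_transpose_matDeriv_of_orthogonal horth (hR t)
  have hskew : (ω t - matDeriv R t * (R t)ᵀ - R t * Ω t * (R t)ᵀ)ᵀ
      = -(ω t - matDeriv R t * (R t)ᵀ - R t * Ω t * (R t)ᵀ) := by
    simp only [transpose_sub, transpose_mul, transpose_transpose, hω, hΩ, hQD, Matrix.mul_neg,
      Matrix.neg_mul, Matrix.mul_assoc]
    abel
  have hcomm (S : Matrix (Fin n) (Fin n) ℝ) (hS : S.IsSymm) :
      Commute (ω t - matDeriv R t * (R t)ᵀ - R t * Ω t * (R t)ᵀ) S := by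
    have h := hyp _ (hS.transpose_mul_mul (R t)) t
    rw [matDeriv_mul_mul_transpose (hR t)] at h
    exact commute_of_corotational_rate_eq (horth t) hQD h
  have hK := eq_zero_of_transpose_eq_neg_of_forall_isSymm_commute hskew hcomm
  rwa [sub_sub, sub_eq_zero] at hK
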